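/- arXiv:2303.16365 — 2 statements merged into one kernel-verified Lean document; each statement's English description precedes it below -/
import Mathlib

section
/- Every isometry of bounded displacement of the Euclidean space ℝⁿ is a pure translation. -/
/-!
By Mazur–Ulam an isometry `γ` of a real normed space is affine, `γ x = L x + γ 0` with `L` linear.
Bounded displacement makes `L - id` a linear map with bounded image, and such a map vanishes
because scaling `x` scales `‖(L - id) x‖` without bound. Hence `γ x = x + γ 0`.
-/

theorem LinearMap.eq_zero_of_forall_norm_le {𝕜 E F : Type*} [NontriviallyNormedField 𝕜]
    [AddCommGroup E] [Module 𝕜 E] [NormedAddCommGroup F] [NormedSpace 𝕜 F]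
    (f : E →ₗ[𝕜] F) {C : ℝ} (hC : ∀ x, ‖f x‖ ≤ C) : f = 0 := by
  ext x
  by_contra hx
  have hpos : 0 < ‖f x‖ := norm_pos_iff.2 hx
  obtain ⟨c, hc⟩ := NormedField.exists_lt_norm 𝕜 (C / ‖f x‖)
  have hcx := hC (c • x)
  rw [map_smul, norm_smul] at hcx
  rw [div_lt_iff₀ hpos] at hc
  linarith

theorem AffineMap.linear_eq_id_of_forall_dist_le {𝕜 E : Type*} [NontriviallyNormedField 𝕜]
    [NormedAddCommGroup E] [NormedSpace 𝕜 E] (f : E →ᵃ[𝕜] E) {C : ℝ}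
    (hC : ∀ x, dist x (f x) ≤ C) : f.linear = LinearMap.id := by
  rw [← sub_eq_zero]
  refine (f.linear - LinearMap.id).eq_zero_of_forall_norm_le (C := C + ‖f 0‖) fun x => ?_
  have hdisp : (f.linear - LinearMap.id : E →ₗ[𝕜] E) x = -(x - f x) - f 0 := by
    rw [LinearMap.sub_apply, LinearMap.id_apply, congrFun f.decomp x, Pi.add_apply]
    abel
  calc ‖(f.linear - LinearMap.id : E →ₗ[𝕜] E) x‖ ≤ ‖x - f x‖ + ‖f 0‖ := by
        simpa only [hdisp, norm_neg] using norm_sub_le (-(x - f x)) (f 0)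
    _ ≤ C + ‖f 0‖ := by
        gcongr
        exact dist_eq_norm x (f x) ▸ hC x

theorem IsometryEquiv.apply_eq_add_of_forall_dist_le {E : Type*} [NormedAddCommGroup E] [NormedSpace ℝ E]
    (γ : E ≃ᵢ E) {C : ℝ} (hC : ∀ x, dist x (γ x) ≤ C) (x : E) : γ x = x + γ 0 := by
  set f := γ.toRealAffineIsometryEquiv.toAffineEquiv.toAffineMap
  have hf : ⇑f = γ := γ.coeFn_toRealAffineIsometryEquiv
  have hlin : f.linear = LinearMap.id := f.linear_eq_id_of_forall_dist_le (hf ▸ hC)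
  rw [← hf, congrFun f.decomp x, hlin]
  rfl

/-- Every isometry of bounded displacement of Euclidean space `ℝⁿ` is a pure translation. -/
theorem bounded_displacement_isometry_euclidean_is_translation
    (n : ℕ) (γ : EuclideanSpace ℝ (Fin n) ≃ᵢ EuclideanSpace ℝ (Fin n))
    (hbdd : ∃ C : ℝ, ∀ x, dist x (γ x) ≤ C) :
    ∃ v : EuclideanSpace ℝ (Fin n), ∀ x, γ x = x + v := by
  obtain ⟨C, hC⟩ := hbdd
  exact ⟨γ 0, γ.apply_eq_add_of_forall_dist_le hC⟩
end

section
/- A unitary transformation u ∈ U(n) acts on the unit sphere S^{2n-1} ⊂ ℂⁿ with constant displacement if and only if all eigenvalues of u have the same real part; equivalently, the eigenvalues of u form a subset of {λ, conj(λ)} for a single unit complex number λ. -/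
/-!
For an isometry `T`, `‖T v - v‖² = 2 - 2 Re⟪T v, v⟫` on the unit sphere, so constant displacement
means that `Re⟪T v, v⟫` is constant there; on a unit eigenvector it is the real part of the
eigenvalue. Conversely, a unitary `T` is normal, so the self-adjoint operator `T + T†` commutes with
`T`; each of its eigenspaces therefore contains an eigenvector of `T`, on which `T + T†` acts by
`μ + conj μ = 2 Re μ`. If all eigenvalues of `T` have real part `r`, the spectral theorem gives
`T + T† = 2r`, i.e. `Re⟪T v, v⟫ = r ‖v‖²`.
-/

open Module.End

open scoped InnerProductSpace ComplexConjugate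

theorem Module.End.HasEigenvalue.exists_norm_eq_one_apply_eq_smul {𝕜 E : Type*} [RCLike 𝕜]
    [NormedAddCommGroup E] [InnerProductSpace 𝕜 E] {T : E →ₗ[𝕜] E} {μ : 𝕜}
    (hμ : HasEigenvalue T μ) : ∃ v, ‖v‖ = 1 ∧ T v = μ • v := by
  obtain ⟨w, hw⟩ := hμ.exists_hasEigenvector
  refine ⟨(‖w‖⁻¹ : 𝕜) • w, ?_, ?_⟩
  · rw [norm_smul, norm_inv, RCLike.norm_ofReal, abs_norm,
      inv_mul_cancel₀ (norm_ne_zero_iff.mpr hw.2)]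
  · rw [map_smul, hw.apply_eq_smul, smul_comm]

namespace LinearMap

section RCLike

variable {𝕜 E : Type*} [RCLike 𝕜] [NormedAddCommGroup E] [InnerProductSpace 𝕜 E]
  [FiniteDimensional 𝕜 E]

theorem IsSymmetric.eq_smul_one_of_forall_hasEigenvalue_eq {S : E →ₗ[𝕜] E} (hS : S.IsSymmetric)
    {c : 𝕜} (h : ∀ μ, HasEigenvalue S μ → μ = c) : S = c • 1 := by
  have hsup : ⨆ μ, eigenspace S μ = eigenspace S c := by
    refine le_antisymm (iSup_le fun μ => ?_) (le_iSup (eigenspace S ·) c)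
    by_cases hμ : HasEigenvalue S μ
    · rw [h μ hμ]
    · rw [hasEigenvalue_iff, not_not] at hμ
      simp [hμ]
  have htop : eigenspace S c = ⊤ := by
    rw [← Submodule.orthogonal_eq_bot_iff, ← hsup, hS.orthogonalComplement_iSup_eigenspaces_eq_bot]
  ext v
  simpa using mem_eigenspace_iff.mp (htop ▸ Submodule.mem_top : v ∈ eigenspace S c)

theorem norm_map_of_mem_unitary {T : E →ₗ[𝕜] E} (hT : T ∈ unitary (E →ₗ[𝕜] E)) (v : E) :
    ‖T v‖ = ‖v‖ := by
  have h : ⟪T v, T v⟫_𝕜 = ⟪v, v⟫_𝕜 := by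
    rw [← adjoint_inner_left, ← star_eq_adjoint, ← mul_apply, Unitary.star_mul_self_of_mem hT,
      one_apply]
  rw [inner_self_eq_norm_sq_to_K, inner_self_eq_norm_sq_to_K] at h
  exact (sq_eq_sq₀ (norm_nonneg _) (norm_nonneg _)).mp (by exact_mod_cast h)

theorem IsStarNormal.norm_map_eq_norm_adjoint_map {T : E →ₗ[𝕜] E} (hT : IsStarNormal T)
    (v : E) : ‖T v‖ = ‖adjoint T v‖ := by
  have h : ⟪T v, T v⟫_𝕜 = ⟪adjoint T v, adjoint T v⟫_𝕜 := by
    rw [← adjoint_inner_left, adjoint_inner_right, ← mul_apply, ← mul_apply, ← star_eq_adjoint,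
      hT.star_comm_self]
  rw [inner_self_eq_norm_sq_to_K, inner_self_eq_norm_sq_to_K] at h
  exact (sq_eq_sq₀ (norm_nonneg _) (norm_nonneg _)).mp (by exact_mod_cast h)

theorem IsStarNormal.adjoint_apply_eq_conj_smul {T : E →ₗ[𝕜] E} (hT : IsStarNormal T) {μ : 𝕜}
    {v : E} (hv : T v = μ • v) : adjoint T v = conj μ • v := by
  have hN : IsStarNormal (T - μ • 1) := Commute.isStarNormal_sub <| by
    rw [star_smul, star_one]
    exact (Commute.one_right T).smul_right (star μ)
  have h := IsStarNormal.norm_map_eq_norm_adjoint_map hN v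
  rw [← star_eq_adjoint, star_sub, star_smul, star_one] at h
  simpa [hv, eq_comm (a := (0 : ℝ)), sub_eq_zero, star_eq_adjoint] using h

end RCLike

variable {E : Type*} [NormedAddCommGroup E] [InnerProductSpace ℂ E] [FiniteDimensional ℂ E]
  {T : E →ₗ[ℂ] E}

theorem IsStarNormal.exists_hasEigenvalue_of_hasEigenvalue_add_adjoint (hT : IsStarNormal T)
    {ν : ℂ} (hν : HasEigenvalue (T + adjoint T) ν) : ∃ μ, HasEigenvalue T μ ∧ ν = μ + conj μ := by
  have hmaps : ∀ x ∈ eigenspace (T + adjoint T) ν, T x ∈ eigenspace (T + adjoint T) ν :=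
    fun x hx => mapsTo_genEigenspace_of_comm ((Commute.refl T).add_left hT.star_comm_self) ν 1 hx
  have : Nontrivial (eigenspace (T + adjoint T) ν) := Submodule.nontrivial_iff_ne_bot.mpr hν
  obtain ⟨μ, hμ⟩ := exists_eigenvalue (T.restrict hmaps)
  obtain ⟨w, hw⟩ := hμ.exists_hasEigenvector
  have hTw : T w = μ • (w : E) := congrArg Subtype.val hw.apply_eq_smul
  have hw0 : (w : E) ≠ 0 := by simpa using hw.2
  refine ⟨μ, hasEigenvalue_of_hasEigenvector ⟨mem_eigenspace_iff.mpr hTw, hw0⟩, ?_⟩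
  have hSw : (T + adjoint T) w = (μ + conj μ) • (w : E) := by
    rw [add_apply, hTw, IsStarNormal.adjoint_apply_eq_conj_smul hT hTw, add_smul]
  exact smul_left_injective ℂ hw0 ((mem_eigenspace_iff.mp w.2).symm.trans hSw)

theorem IsStarNormal.re_inner_map_self_eq_of_forall_hasEigenvalue_re_eq (hT : IsStarNormal T)
    {r : ℝ} (h : ∀ μ, HasEigenvalue T μ → μ.re = r) (v : E) :
    (⟪T v, v⟫_ℂ).re = r * ‖v‖ ^ 2 := by
  have hS : T + adjoint T = ((2 * r : ℝ) : ℂ) • 1 := by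
    refine IsSymmetric.eq_smul_one_of_forall_hasEigenvalue_eq ?_ fun ν hν => ?_
    · exact (isSymmetric_iff_isSelfAdjoint _).mpr (IsSelfAdjoint.add_star_self T)
    · obtain ⟨μ, hμ, rfl⟩ := IsStarNormal.exists_hasEigenvalue_of_hasEigenvalue_add_adjoint hT hν
      rw [Complex.add_conj, h μ hμ]
  have h2 := congrArg (fun S : E →ₗ[ℂ] E => (⟪S v, v⟫_ℂ).re) hS
  simp only [add_apply, inner_add_left, adjoint_inner_left, smul_apply, one_apply,
    inner_smul_left, Complex.conj_ofReal, Complex.add_re, Complex.re_ofReal_mul] at h2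
  rw [← inner_conj_symm v (T v), Complex.conj_re,
    show (⟪v, v⟫_ℂ).re = ‖v‖ ^ 2 from inner_self_eq_norm_sq (𝕜 := ℂ) v] at h2
  linarith

theorem IsStarNormal.exists_forall_re_inner_eq_iff (hT : IsStarNormal T) :
    (∃ r : ℝ, ∀ v : E, ‖v‖ = 1 → (⟪T v, v⟫_ℂ).re = r) ↔
      ∃ r : ℝ, ∀ μ, HasEigenvalue T μ → μ.re = r := by
  constructor
  · rintro ⟨r, hr⟩
    refine ⟨r, fun μ hμ => ?_⟩
    obtain ⟨v, hv, hTv⟩ := hμ.exists_norm_eq_one_apply_eq_smul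
    simpa [hTv, inner_smul_left, hv] using hr v hv
  · rintro ⟨r, hr⟩
    refine ⟨r, fun v hv => ?_⟩
    rw [IsStarNormal.re_inner_map_self_eq_of_forall_hasEigenvalue_re_eq hT hr, hv, one_pow,
      mul_one]

end LinearMap

theorem exists_forall_norm_sub_self_eq_iff_exists_forall_re_inner_eq {𝕜 E : Type*} [RCLike 𝕜]
    [NormedAddCommGroup E] [InnerProductSpace 𝕜 E] {T : E → E} (hT : ∀ v, ‖T v‖ = ‖v‖) :
    (∃ c : ℝ, ∀ v, ‖v‖ = 1 → ‖T v - v‖ = c) ↔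
      ∃ r : ℝ, ∀ v, ‖v‖ = 1 → RCLike.re ⟪T v, v⟫_𝕜 = r := by
  have hsq : ∀ v, ‖v‖ = 1 → ‖T v - v‖ ^ 2 = 2 - 2 * RCLike.re ⟪T v, v⟫_𝕜 := fun v hv => by
    rw [@norm_sub_sq 𝕜, hT, hv]
    ring
  constructor
  · rintro ⟨c, hc⟩
    refine ⟨1 - c ^ 2 / 2, fun v hv => ?_⟩
    linarith [hc v hv ▸ hsq v hv]
  · rintro ⟨r, hr⟩
    refine ⟨√(2 - 2 * r), fun v hv => ?_⟩
    rw [← hr v hv, ← hsq v hv, Real.sqrt_sq (norm_nonneg _)]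

theorem Matrix.toEuclideanLin_mem_unitary {𝕜 n : Type*} [RCLike 𝕜] [Fintype n] [DecidableEq n]
    {A : Matrix n n 𝕜} (hA : A ∈ Matrix.unitaryGroup n 𝕜) :
    Matrix.toEuclideanLin A ∈ unitary (EuclideanSpace 𝕜 n →ₗ[𝕜] EuclideanSpace 𝕜 n) := by
  have hmul : ∀ B C : Matrix n n 𝕜, toEuclideanLin (B * C) = toEuclideanLin B * toEuclideanLin C :=
    fun B C => by ext; simp [Matrix.mulVec_mulVec]
  rw [Unitary.mem_iff, LinearMap.star_eq_adjoint, ← toEuclideanLin_conjTranspose_eq_adjoint,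
    ← star_eq_conjTranspose, ← hmul, ← hmul, Unitary.star_mul_self_of_mem hA,
    Unitary.mul_star_self_of_mem hA]
  simp [← Module.End.one_eq_id]

/-- A unitary transformation `u ∈ U(n)` acts on the unit sphere `S^{2n-1} ⊂ ℂⁿ` with
constant displacement if and only if all eigenvalues of `u` have the same real part. -/
theorem unitary_constant_displacement_iff_eigenvalues_same_re
    (n : ℕ) (u : Matrix.unitaryGroup (Fin n) ℂ) :
    (∃ c : ℝ, ∀ v : EuclideanSpace ℂ (Fin n), ‖v‖ = 1 →
      ‖Matrix.toEuclideanLin (u : Matrix (Fin n) (Fin n) ℂ) v - v‖ = c) ↔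
    (∃ r : ℝ, ∀ μ : ℂ,
      Module.End.HasEigenvalue
        (Matrix.toEuclideanLin (u : Matrix (Fin n) (Fin n) ℂ)) μ → μ.re = r) := by
  have hu := Matrix.toEuclideanLin_mem_unitary u.2
  exact (exists_forall_norm_sub_self_eq_iff_exists_forall_re_inner_eq (𝕜 := ℂ)
    (LinearMap.norm_map_of_mem_unitary hu)).trans
    (LinearMap.IsStarNormal.exists_forall_re_inner_eq_iff (isStarNormal_of_mem_unitary hu))
end
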